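/- Let n ≥ 2 and let k : Fin n → Bool satisfy k(n−1) = false, and set W = number of positions p with k(p) = true. Then the number p_k of unordered pairs {p, q} of distinct positions in Fin n such that P(i ∘ (transposition of p and q), k) = P(i, k) for all binary strings i equals C(W, 2) + C(n − W, 2) (binomial coefficients), and consequently 4·(C(n, 2) − p_k) = 4·W·(n − W). -/

import Mathlib

/-!
Since the last bit of `k` is `0`, `P(i, k) = (-1)^{#(i ∧ k)} F(#(i ≠ k) - 1)` depends on `i` only
through two overlap counts with `k`. A swap of two positions on which `k` agrees is a permutation
fixing `k`, so it preserves both counts. A swap of a `1` and a `0` of `k` sends `P(k, k) =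
(-1)^W F(-1)` to `(-1)^{W-1} F(1) = -P(k, k) ≠ 0`. Hence `p_k` counts the pairs inside the ones
and inside the zeros of `k`, and `C(n, 2) = C(W, 2) + C(n - W, 2) + W(n - W)` gives the rest.
-/

/-- `F α = ((1+√2)^α − (1−√2)^α)/(2√2)` with integer powers. -/
noncomputable def Ffun (α : ℤ) : ℝ :=
  ((1 + Real.sqrt 2) ^ α - (1 - Real.sqrt 2) ^ α) / (2 * Real.sqrt 2)

/-- `c'(i,k)`: number of positions `p < n−1` with `i p = k p = true`. -/
def cB (n : ℕ) (i k : Fin n → Bool) : ℕ :=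
  (Finset.univ.filter fun p : Fin n => (p : ℕ) < n - 1 ∧ i p = true ∧ k p = true).card

/-- `d'(i,k)`: number of positions `p < n−1` with `i p ≠ k p`. -/
def dB (n : ℕ) (i k : Fin n → Bool) : ℕ :=
  (Finset.univ.filter fun p : Fin n => (p : ℕ) < n - 1 ∧ i p ≠ k p).card

/-- Numerical value (`0` or `1`) of the last bit of `i`. -/
def lastBit (n : ℕ) (i : Fin n → Bool) : ℕ :=
  (Finset.univ.filter fun p : Fin n => (p : ℕ) = n - 1 ∧ i p = true).card

/-- `P(i,k) = (−1)^{c'(i,k)}·F(d'(i,k) − 1 + a + b)` where `a, b` are the last bits of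
`i` and `k`. -/
noncomputable def Pb (n : ℕ) (i k : Fin n → Bool) : ℝ :=
  (-1 : ℝ) ^ cB n i k * Ffun ((dB n i k : ℤ) - 1 + (lastBit n i : ℤ) + (lastBit n k : ℤ))

open Finset

theorem Ffun_neg_one : Ffun (-1) = 1 := by
  have hs : Real.sqrt 2 ^ 2 = 2 := Real.sq_sqrt (by norm_num)
  have hpos : 1 < Real.sqrt 2 := by nlinarith [Real.sqrt_nonneg 2]
  have h1 : 1 + Real.sqrt 2 ≠ 0 := by positivity
  have h2 : 1 - Real.sqrt 2 ≠ 0 := by linarith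
  unfold Ffun
  rw [zpow_neg_one, zpow_neg_one]
  field_simp
  nlinarith

theorem Ffun_one : Ffun 1 = 1 := by
  unfold Ffun
  field_simp
  ring

section LastBitFalse

variable {n : ℕ} {k : Fin n → Bool}

theorem card_filter_val_lt_add_card_filter_val_eq (Q : Fin n → Prop) [DecidablePred Q] :
    #{p : Fin n | (p : ℕ) < n - 1 ∧ Q p} + #{p : Fin n | (p : ℕ) = n - 1 ∧ Q p} =
      #{p | Q p} := by
  rw [← card_union_of_disjoint (disjoint_filter.2 fun p _ h h' => by omega), ← filter_or]
  congr 1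
  refine filter_congr fun p _ => ?_
  rw [← or_and_right, and_iff_right_iff_imp]
  intro
  omega

variable (hk : ∀ p : Fin n, (p : ℕ) = n - 1 → k p = false)
include hk

theorem cB_of_last_false (i : Fin n → Bool) : cB n i k = #{p | i p = true ∧ k p = true} := by
  rw [cB, ← card_filter_val_lt_add_card_filter_val_eq (fun p => i p = true ∧ k p = true),
    left_eq_add, card_eq_zero, filter_eq_empty_iff]
  rintro p - ⟨hp, -, hkp⟩
  simp [hk p hp] at hkp

theorem dB_add_lastBit_of_last_false (i : Fin n → Bool) :
    dB n i k + lastBit n i = #{p | i p ≠ k p} := by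
  rw [dB, lastBit, ← card_filter_val_lt_add_card_filter_val_eq (fun p => i p ≠ k p)]
  congr 1
  refine congrArg card (filter_congr fun p _ => and_congr_right fun hp => ?_)
  simp [hk p hp]

theorem Pb_of_last_false (i : Fin n → Bool) :
    Pb n i k = (-1) ^ #{p | i p = true ∧ k p = true} * Ffun (#{p | i p ≠ k p} - 1) := by
  have hi := dB_add_lastBit_of_last_false hk i
  have hk0 : lastBit n k = 0 := by
    have h := dB_add_lastBit_of_last_false hk k
    simp only [ne_eq, not_true_eq_false, filter_false, card_empty] at h
    omega
  rw [Pb, cB_of_last_false hk, hk0, ← hi]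
  push_cast
  ring_nf

end LastBitFalse

section Swap

variable {n : ℕ} {k : Fin n → Bool} (hk : ∀ p : Fin n, (p : ℕ) = n - 1 → k p = false)
include hk

theorem Pb_comp_perm (σ : Equiv.Perm (Fin n)) (hσ : ∀ p, k (σ p) = k p) (i : Fin n → Bool) :
    Pb n (i ∘ σ) k = Pb n i k := by
  have hcard (Q : Bool → Bool → Prop) [∀ a b, Decidable (Q a b)] :
      #{p | Q (i (σ p)) (k p)} = #{p | Q (i p) (k p)} :=
    card_equiv σ fun p => by simp [hσ]
  rw [Pb_of_last_false hk, Pb_of_last_false hk]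
  simp only [Function.comp_apply, hcard (fun a b => a = true ∧ b = true), hcard (· ≠ ·)]

theorem Pb_self_ne_zero : Pb n k k ≠ 0 := by
  simp [Pb_of_last_false hk, Ffun_neg_one]

theorem Pb_comp_swap_self {p q : Fin n} (hp : k p = true) (hq : k q = false) :
    Pb n (k ∘ Equiv.swap p q) k = -Pb n k k := by
  have hpq : p ≠ q := by rintro rfl; simp [hp] at hq
  have hmem : p ∈ ({r | k r = true ∧ k r = true} : Finset (Fin n)) := by simp [hp]
  have hboth : ({r | k (Equiv.swap p q r) = true ∧ k r = true} : Finset (Fin n)) =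
      ({r | k r = true ∧ k r = true} : Finset (Fin n)).erase p := by
    ext r
    by_cases r = p <;> by_cases r = q <;> simp_all [Equiv.swap_apply_of_ne_of_ne]
  have hdiff : ({r | k (Equiv.swap p q r) ≠ k r} : Finset (Fin n)) = {p, q} := by
    ext r
    by_cases r = p <;> by_cases r = q <;> simp_all [Equiv.swap_apply_of_ne_of_ne]
  rw [Pb_of_last_false hk, Pb_of_last_false hk, ← card_erase_add_one hmem]
  simp only [Function.comp_apply, hboth, hdiff, card_pair hpq, ne_eq, not_true_eq_false,
    filter_false, card_empty]
  norm_num [Ffun_one, Ffun_neg_one, pow_succ]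

theorem Pb_comp_swap_eq_iff {p q : Fin n} :
    (∀ i, Pb n (i ∘ Equiv.swap p q) k = Pb n i k) ↔ k p = k q := by
  refine ⟨fun h => ?_, fun hpq => Pb_comp_perm hk _ (Equiv.apply_swap_eq_self hpq)⟩
  by_contra hne
  wlog hp : k p = true generalizing p q
  · exact this (fun i => by rw [Equiv.swap_comm]; exact h i) (Ne.symm hne)
      (by cases hkq : k q <;> simp_all)
  have hq : k q = false := by simpa [hp] using (Ne.symm hne)
  have := h k
  rw [Pb_comp_swap_self hk hp hq, neg_eq_iff_add_eq_zero, ← two_mul] at this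
  exact Pb_self_ne_zero hk (by simpa using this)

end Swap

theorem Nat.choose_two_add (a b : ℕ) : (a + b).choose 2 = a.choose 2 + b.choose 2 + a * b := by
  qify [Nat.cast_choose_two]
  ring

section Pairs

variable {α : Type*} [Fintype α] [LinearOrder α]

theorem card_pairs_lt_eq_sum_choose {β : Type*} [Fintype β] [DecidableEq β] (f : α → β) :
    #{x : α × α | x.1 < x.2 ∧ f x.1 = f x.2} = ∑ b, (#{a | f a = b}).choose 2 := by
  rw [card_eq_sum_card_fiberwise (f := fun x => f x.1) (t := univ) (by simp)]
  refine sum_congr rfl fun b _ => ?_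
  rw [← card_product_filter_lt, filter_filter]
  congr 1
  ext x
  simp only [mem_filter, mem_univ, mem_product, true_and]
  grind

theorem card_pairs_lt_eq_choose_add_choose (f : α → Bool) :
    #{x : α × α | x.1 < x.2 ∧ f x.1 = f x.2} =
      (#{a | f a = true}).choose 2 + (Fintype.card α - #{a | f a = true}).choose 2 := by
  have hfalse : #{a | f a = false} = Fintype.card α - #{a | f a = true} := by
    rw [← card_univ, ← card_filter_add_card_filter_not (s := univ) (fun a => f a = true)]
    simp
  rw [card_pairs_lt_eq_sum_choose, Fintype.sum_bool, hfalse]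

end Pairs

/-- The number `p_k` of unordered pairs of distinct positions whose swap preserves the
`k`-th eigenvector equals `C(W,2) + C(n−W,2)`, whence `4(C(n,2) − p_k) = 4W(n−W)`. -/
theorem stmt17 (n : ℕ) (hn : 2 ≤ n) (k : Fin n → Bool)
    (hk : k (⟨n - 1, by omega⟩ : Fin n) = false) :
    {pq : Fin n × Fin n | pq.1 < pq.2 ∧
        ∀ i : Fin n → Bool, Pb n (i ∘ Equiv.swap pq.1 pq.2) k = Pb n i k}.ncard =
      Nat.choose ((Finset.univ.filter fun p : Fin n => k p = true).card) 2 +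
        Nat.choose (n - (Finset.univ.filter fun p : Fin n => k p = true).card) 2 ∧
    4 * (Nat.choose n 2 -
        {pq : Fin n × Fin n | pq.1 < pq.2 ∧
          ∀ i : Fin n → Bool, Pb n (i ∘ Equiv.swap pq.1 pq.2) k = Pb n i k}.ncard) =
      4 * ((Finset.univ.filter fun p : Fin n => k p = true).card) *
        (n - (Finset.univ.filter fun p : Fin n => k p = true).card) := by
  have hk' (p : Fin n) (hp : (p : ℕ) = n - 1) : k p = false := (congrArg k (Fin.ext hp)).trans hk
  have hcount : {pq : Fin n × Fin n | pq.1 < pq.2 ∧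
      ∀ i : Fin n → Bool, Pb n (i ∘ Equiv.swap pq.1 pq.2) k = Pb n i k}.ncard =
      (#{p | k p = true}).choose 2 + (n - #{p | k p = true}).choose 2 := by
    simp_rw [Pb_comp_swap_eq_iff hk']
    rw [← coe_filter_univ, Set.ncard_coe_finset, card_pairs_lt_eq_choose_add_choose,
      Fintype.card_fin]
  refine ⟨hcount, ?_⟩
  rw [hcount]
  have hW : #{p | k p = true} ≤ n := (card_le_univ _).trans_eq (Fintype.card_fin n)
  generalize #{p | k p = true} = W at hW ⊢
  obtain ⟨m, rfl⟩ := Nat.exists_eq_add_of_le hW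
  rw [Nat.choose_two_add, Nat.add_sub_cancel_left, Nat.add_sub_cancel_left, mul_assoc]
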